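/- arXiv:1410.3584 — 4 statements merged into one kernel-verified Lean document; each statement's English description precedes it below -/
import Mathlib

section
/- For σ > 0, the convolution of the 3D Coulomb kernel U(x) = 1/(4π|x|) with the Gaussian ρ(x) = exp(-|x|²/σ²) equals (σ³√π/(4|x|)) · Erf(|x|/σ) for x ≠ 0, where Erf(r) = (2/√π)∫₀^r e^{-t²} dt. -/
/-!
For `r > 0`, `1 / r = (2 / √π) ∫₀^∞ exp (-t² r²) dt`. Inserting this with `r = ‖x - y‖` and
swapping the integrals reduces the convolution to a `t`-integral of convolutions of two Gaussians,
which are explicit: with `b = σ⁻²`,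
`∫ exp (-t² ‖x - y‖²) exp (-b ‖y‖²) dy = (π / (t² + b)) ^ (3/2) exp (-(t² b / (t² + b)) ‖x‖²)`.
The substitution `u = √b ‖x‖ t / √(t² + b)`, which maps `(0, ∞)` onto `(0, √b ‖x‖)`, turns the
remaining integral into an error function.
-/

open Real MeasureTheory

noncomputable def erf (r : ℝ) : ℝ := (2 / Real.sqrt π) * ∫ t in (0:ℝ)..r, Real.exp (-t^2)

open Set Filter Topology
open scoped RealInnerProductSpace

lemma hasDerivAt_erf (r : ℝ) : HasDerivAt erf (2 / √π * exp (-r ^ 2)) r :=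
  ((continuous_exp.comp (continuous_pow 2).neg).integral_hasStrictDerivAt 0 r).hasDerivAt
    |>.const_mul _

lemma continuous_erf : Continuous erf :=
  continuous_iff_continuousAt.2 fun r => (hasDerivAt_erf r).continuousAt

lemma erf_zero : erf 0 = 0 := by
  simp [erf]

lemma integral_exp_neg_sq_mul_sq_Ioi {r : ℝ} (hr : 0 < r) :
    ∫ t in Ioi (0 : ℝ), exp (-t ^ 2 * r ^ 2) = √π / (2 * r) := by
  simp_rw [neg_mul, mul_comm (_ ^ 2) (r ^ 2), ← neg_mul]
  rw [integral_gaussian_Ioi, sqrt_div pi_nonneg, sqrt_sq hr.le, div_div, mul_comm r]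

section Gaussian

variable {V : Type*} [NormedAddCommGroup V] [InnerProductSpace ℝ V]

lemma exp_neg_mul_sq_norm_add_inner_eq_re {b c : ℝ} (w v : V) :
    exp (-b * ‖v‖ ^ 2 + c * ⟪w, v⟫) = (Complex.exp (-(b : ℂ) * ‖v‖ ^ 2 + c * ⟪w, v⟫)).re := by
  rw [← Complex.ofReal_re (exp _), Complex.ofReal_exp]
  push_cast
  rfl

lemma exp_neg_mul_sq_norm_sub_mul_exp_neg_mul_sq_norm (s b : ℝ) (x y : V) :
    exp (-s * ‖x - y‖ ^ 2) * exp (-b * ‖y‖ ^ 2) =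
      exp (-s * ‖x‖ ^ 2) * exp (-(s + b) * ‖y‖ ^ 2 + 2 * s * ⟪x, y⟫) := by
  rw [← exp_add, ← exp_add, norm_sub_sq_real]
  ring_nf

variable [FiniteDimensional ℝ V] [MeasurableSpace V] [BorelSpace V]

lemma integrable_exp_neg_mul_sq_norm_add_inner {b : ℝ} (hb : 0 < b) (c : ℝ) (w : V) :
    Integrable fun v : V => exp (-b * ‖v‖ ^ 2 + c * ⟪w, v⟫) := by
  simp_rw [exp_neg_mul_sq_norm_add_inner_eq_re]
  exact (GaussianFourier.integrable_cexp_neg_mul_sq_norm_add (by simpa) c w).re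

lemma integral_exp_neg_mul_sq_norm_add_inner {b : ℝ} (hb : 0 < b) (c : ℝ) (w : V) :
    ∫ v : V, exp (-b * ‖v‖ ^ 2 + c * ⟪w, v⟫) =
      (π / b) ^ (Module.finrank ℝ V / 2 : ℝ) * exp (c ^ 2 * ‖w‖ ^ 2 / (4 * b)) := by
  simp_rw [exp_neg_mul_sq_norm_add_inner_eq_re]
  have hb' : 0 < (b : ℂ).re := by simpa
  calc ∫ v : V, (Complex.exp (-(b : ℂ) * ‖v‖ ^ 2 + c * ⟪w, v⟫)).re
      = (∫ v : V, Complex.exp (-(b : ℂ) * ‖v‖ ^ 2 + c * ⟪w, v⟫)).re :=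
        integral_re (GaussianFourier.integrable_cexp_neg_mul_sq_norm_add hb' c w)
    _ = _ := by
      rw [GaussianFourier.integral_cexp_neg_mul_sq_norm_add hb' c w, ← Complex.ofReal_re
        ((π / b) ^ (Module.finrank ℝ V / 2 : ℝ) * exp (c ^ 2 * ‖w‖ ^ 2 / (4 * b)))]
      push_cast [Complex.ofReal_cpow (by positivity : 0 ≤ π / b)]
      rfl

lemma integrable_exp_neg_mul_sq_norm_sub_mul_exp_neg_mul_sq_norm {s b : ℝ} (hsb : 0 < s + b)
    (x : V) : Integrable fun y : V => exp (-s * ‖x - y‖ ^ 2) * exp (-b * ‖y‖ ^ 2) := by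
  simp_rw [exp_neg_mul_sq_norm_sub_mul_exp_neg_mul_sq_norm]
  exact (integrable_exp_neg_mul_sq_norm_add_inner hsb _ x).const_mul _

lemma integral_exp_neg_mul_sq_norm_sub_mul_exp_neg_mul_sq_norm {s b : ℝ} (hsb : 0 < s + b)
    (x : V) : ∫ y : V, exp (-s * ‖x - y‖ ^ 2) * exp (-b * ‖y‖ ^ 2) =
      (π / (s + b)) ^ (Module.finrank ℝ V / 2 : ℝ) * exp (-(s * b / (s + b)) * ‖x‖ ^ 2) := by
  simp_rw [exp_neg_mul_sq_norm_sub_mul_exp_neg_mul_sq_norm]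
  rw [integral_const_mul, integral_exp_neg_mul_sq_norm_add_inner hsb, mul_left_comm, ← exp_add]
  congr 3
  field_simp
  ring

end Gaussian

lemma rpow_three_halves_eq_mul_sqrt {x : ℝ} (hx : 0 ≤ x) : x ^ (3 / 2 : ℝ) = x * √x := by
  rw [show (3 / 2 : ℝ) = 1 + 1 / 2 by norm_num, rpow_add' hx (by norm_num), rpow_one,
    ← sqrt_eq_rpow]

section Profile

variable {b : ℝ}

lemma hasDerivAt_div_sqrt_sq_add (hb : 0 < b) (t : ℝ) :
    HasDerivAt (fun s : ℝ => s / √(s ^ 2 + b)) (b / ((t ^ 2 + b) * √(t ^ 2 + b))) t := by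
  have hu : 0 < t ^ 2 + b := by positivity
  have hq : √(t ^ 2 + b) ≠ 0 := (sqrt_pos.2 hu).ne'
  have hsqrt : HasDerivAt (fun s : ℝ => √(s ^ 2 + b)) (2 * t / (2 * √(t ^ 2 + b))) t :=
    (((hasDerivAt_pow 2 t).add_const b).sqrt hu.ne').congr_deriv (by ring)
  refine ((hasDerivAt_id t).div hsqrt hq).congr_deriv ?_
  rw [id, sq_sqrt hu.le]
  field_simp
  rw [sq_sqrt hu.le]
  ring

lemma tendsto_div_sqrt_sq_add_atTop (b : ℝ) :
    Tendsto (fun t : ℝ => t / √(t ^ 2 + b)) atTop (𝓝 1) := by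
  have hlim : Tendsto (fun t : ℝ => (1 + b * (t ^ 2)⁻¹)⁻¹) atTop (𝓝 1) := by
    simpa using ((tendsto_inv_atTop_zero.comp (tendsto_pow_atTop two_ne_zero)).const_mul b
      |>.const_add 1).inv₀ (by simp)
  have hsqrt : Tendsto (fun t : ℝ => √((1 + b * (t ^ 2)⁻¹)⁻¹)) atTop (𝓝 1) := by
    simpa using hlim.sqrt
  refine hsqrt.congr' ?_
  filter_upwards [eventually_gt_atTop 0,
    (tendsto_atTop_add_const_right _ b (tendsto_pow_atTop two_ne_zero)).eventually_gt_atTop 0]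
    with t ht hu
  rw [show (1 + b * (t ^ 2)⁻¹)⁻¹ = t ^ 2 / (t ^ 2 + b) by field_simp, sqrt_div (sq_nonneg t),
    sqrt_sq ht.le]

lemma hasDerivAt_erf_comp_div_sqrt (hb : 0 < b) {R : ℝ} (hR : R ≠ 0) (t : ℝ) :
    HasDerivAt (fun s : ℝ => π ^ 2 / (2 * b * √b * R) * erf (√b * R * (s / √(s ^ 2 + b))))
      ((π / (t ^ 2 + b)) ^ (3 / 2 : ℝ) * exp (-(t ^ 2 * b / (t ^ 2 + b)) * R ^ 2)) t := by
  have hu : 0 < t ^ 2 + b := by positivity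
  have hq : √(t ^ 2 + b) ≠ 0 := (sqrt_pos.2 hu).ne'
  have hsb : √b ≠ 0 := (sqrt_pos.2 hb).ne'
  have hsπ : √π ≠ 0 := (sqrt_pos.2 pi_pos).ne'
  refine (((hasDerivAt_erf _).comp t ((hasDerivAt_div_sqrt_sq_add hb t).const_mul (√b * R))
    ).const_mul _).congr_deriv ?_
  have hexp : (√b * R * (t / √(t ^ 2 + b))) ^ 2 = t ^ 2 * b / (t ^ 2 + b) * R ^ 2 := by
    rw [mul_pow, mul_pow, div_pow, sq_sqrt hb.le, sq_sqrt hu.le]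
    ring
  rw [hexp, rpow_three_halves_eq_mul_sqrt (by positivity), sqrt_div pi_nonneg, neg_mul]
  field_simp
  rw [sq_sqrt pi_nonneg]

lemma tendsto_erf_comp_div_sqrt_atTop (b R : ℝ) :
    Tendsto (fun s : ℝ => π ^ 2 / (2 * b * √b * R) * erf (√b * R * (s / √(s ^ 2 + b)))) atTop
      (𝓝 (π ^ 2 / (2 * b * √b * R) * erf (√b * R))) := by
  have hlim := ((tendsto_div_sqrt_sq_add_atTop b).const_mul (√b * R))
  rw [mul_one] at hlim
  exact ((continuous_erf.tendsto _).comp hlim).const_mul _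

lemma integrableOn_Ioi_rpow_three_halves_mul_exp (hb : 0 < b) {R : ℝ} (hR : R ≠ 0) :
    IntegrableOn (fun t : ℝ => (π / (t ^ 2 + b)) ^ (3 / 2 : ℝ) *
      exp (-(t ^ 2 * b / (t ^ 2 + b)) * R ^ 2)) (Ioi 0) :=
  integrableOn_Ioi_deriv_of_nonneg' (fun t _ => hasDerivAt_erf_comp_div_sqrt hb hR t)
    (fun t _ => by positivity) (tendsto_erf_comp_div_sqrt_atTop b R)

lemma integral_Ioi_rpow_three_halves_mul_exp (hb : 0 < b) {R : ℝ} (hR : R ≠ 0) :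
    ∫ t in Ioi (0 : ℝ), (π / (t ^ 2 + b)) ^ (3 / 2 : ℝ) *
      exp (-(t ^ 2 * b / (t ^ 2 + b)) * R ^ 2) = π ^ 2 / (2 * b * √b * R) * erf (√b * R) := by
  rw [integral_Ioi_of_hasDerivAt_of_nonneg' (fun t _ => hasDerivAt_erf_comp_div_sqrt hb hR t)
    (fun t _ => by positivity) (tendsto_erf_comp_div_sqrt_atTop b R)]
  simp [erf_zero]

end Profile

local notation "ℝ³" => EuclideanSpace ℝ (Fin 3)

lemma integral_exp_neg_sq_mul_sq_norm_sub_mul_exp_neg_mul_sq_norm {b : ℝ} (hb : 0 < b) (t : ℝ)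
    (x : ℝ³) : ∫ y : ℝ³, exp (-t ^ 2 * ‖x - y‖ ^ 2) * exp (-b * ‖y‖ ^ 2) =
      (π / (t ^ 2 + b)) ^ (3 / 2 : ℝ) * exp (-(t ^ 2 * b / (t ^ 2 + b)) * ‖x‖ ^ 2) := by
  rw [integral_exp_neg_mul_sq_norm_sub_mul_exp_neg_mul_sq_norm (by positivity),
    finrank_euclideanSpace_fin]
  norm_num

lemma integrable_exp_neg_sq_mul_sq_norm_sub_mul_exp_neg_mul_sq_norm_prod {b : ℝ} (hb : 0 < b)
    {x : ℝ³} (hx : x ≠ 0) :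
    Integrable (Function.uncurry fun (t : ℝ) (y : ℝ³) =>
      exp (-t ^ 2 * ‖x - y‖ ^ 2) * exp (-b * ‖y‖ ^ 2)) ((volume.restrict (Ioi 0)).prod volume) := by
  rw [integrable_prod_iff (Continuous.aestronglyMeasurable (by fun_prop))]
  refine ⟨ae_of_all _ fun t =>
    integrable_exp_neg_mul_sq_norm_sub_mul_exp_neg_mul_sq_norm (s := t ^ 2) (by positivity) x, ?_⟩
  refine (integrableOn_Ioi_rpow_three_halves_mul_exp hb (norm_ne_zero_iff.2 hx)).congr
    (ae_of_all _ fun t => ?_)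
  simp only [Function.uncurry_apply_pair, norm_of_nonneg (by positivity : 0 ≤ exp _ * exp _)]
  rw [integral_exp_neg_sq_mul_sq_norm_sub_mul_exp_neg_mul_sq_norm hb]

theorem coulomb3d_gaussian_convolution (σ : ℝ) (hσ : 0 < σ)
    (x : EuclideanSpace ℝ (Fin 3)) (hx : x ≠ 0) :
    (∫ y : EuclideanSpace ℝ (Fin 3),
        (1 / (4 * π * ‖x - y‖)) * Real.exp (-‖y‖^2 / σ^2))
      = (σ^3 * Real.sqrt π / (4 * ‖x‖)) * erf (‖x‖ / σ) := by
  set b : ℝ := (σ ^ 2)⁻¹ with hb_def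
  have hb : 0 < b := by positivity
  calc (∫ y : ℝ³, (1 / (4 * π * ‖x - y‖)) * exp (-‖y‖ ^ 2 / σ ^ 2))
      = ∫ y : ℝ³, 1 / (2 * π * √π) *
          ∫ t in Ioi (0 : ℝ), exp (-t ^ 2 * ‖x - y‖ ^ 2) * exp (-b * ‖y‖ ^ 2) := by
        refine integral_congr_ae ((volume.ae_ne x).mono fun y hy => ?_)
        beta_reduce
        rw [integral_mul_const,
          integral_exp_neg_sq_mul_sq_Ioi (norm_pos_iff.2 (sub_ne_zero.2 hy.symm)), hb_def,
          neg_mul, ← div_eq_inv_mul, ← neg_div]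
        field_simp
        norm_num
    _ = 1 / (2 * π * √π) * ∫ t in Ioi (0 : ℝ), ∫ y : ℝ³,
          exp (-t ^ 2 * ‖x - y‖ ^ 2) * exp (-b * ‖y‖ ^ 2) := by
        rw [integral_const_mul, integral_integral_swap
          (integrable_exp_neg_sq_mul_sq_norm_sub_mul_exp_neg_mul_sq_norm_prod hb hx)]
    _ = 1 / (2 * π * √π) * (π ^ 2 / (2 * b * √b * ‖x‖) * erf (√b * ‖x‖)) := by
        simp_rw [integral_exp_neg_sq_mul_sq_norm_sub_mul_exp_neg_mul_sq_norm hb _ x]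
        rw [integral_Ioi_rpow_three_halves_mul_exp hb (norm_ne_zero_iff.2 hx)]
    _ = (σ ^ 3 * √π / (4 * ‖x‖)) * erf (‖x‖ / σ) := by
        have hsb : √b = σ⁻¹ := by rw [sqrt_inv, sqrt_sq hσ.le]
        rw [hsb, inv_mul_eq_div, hb_def]
        field_simp
        rw [sq_sqrt pi_nonneg]
        ring
end

section
/- For σ > 0 and x ∈ ℝ, the convolution of U(x) = -|x|/2 with the normalized Gaussian G(x) = (1/(√(2π)σ)) e^{-x²/(2σ²)} equals u(x) = -(σ/√(2π)) e^{-x²/(2σ²)} - (x/2)·Erf(x/(√2 σ)). -/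
/-! Write `g(y) = exp(-y²/(2σ²))`. Splitting the real line at `x`,
`∫ |x - y| g(y) dy = x (∫_{y ≤ x} g - ∫_{y > x} g) + (∫_{y > x} y g - ∫_{y ≤ x} y g)`.
Since `g` is even, the first bracket is `2 ∫₀ˣ g`, which the substitution `y = √2 σ t` turns
into `√(2π) σ erf(x / (√2 σ))`; since `y g(y)` has the antiderivative `-σ² g(y)` vanishing at
`±∞`, the second bracket is `2 σ² g(x)`. -/

open Real MeasureTheory

open Filter Topology Set

section SplitAtPoint

variable {g : ℝ → ℝ}

theorem integral_abs_sub_mul_eq (hg : Integrable g) (hyg : Integrable fun y => y * g y) (x : ℝ) :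
    ∫ y, |x - y| * g y
      = x * ((∫ y in Iic x, g y) - ∫ y in Ioi x, g y)
        + ((∫ y in Ioi x, y * g y) - ∫ y in Iic x, y * g y) := by
  have hleft : EqOn (fun y => |x - y| * g y) (fun y => x * g y - y * g y) (Iic x) :=
    fun y hy => by dsimp only; rw [abs_of_nonneg (sub_nonneg.2 hy)]; ring
  have hright : EqOn (fun y => |x - y| * g y) (fun y => y * g y - x * g y) (Ioi x) :=
    fun y hy => by dsimp only; rw [abs_sub_comm, abs_of_pos (sub_pos.2 hy)]; ring
  have hxg : Integrable fun y => x * g y := hg.const_mul x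
  rw [← intervalIntegral.integral_Iic_add_Ioi
      (((hxg.sub hyg).integrableOn).congr_fun hleft.symm measurableSet_Iic)
      (((hyg.sub hxg).integrableOn).congr_fun hright.symm measurableSet_Ioi),
    setIntegral_congr_fun measurableSet_Iic hleft, setIntegral_congr_fun measurableSet_Ioi hright,
    integral_sub hxg.integrableOn hyg.integrableOn, integral_sub hyg.integrableOn hxg.integrableOn,
    integral_const_mul, integral_const_mul]
  ring

theorem integral_Iic_sub_integral_Ioi_of_even (hg : Integrable g) (heven : ∀ y, g (-y) = g y)
    (x : ℝ) : (∫ y in Iic x, g y) - ∫ y in Ioi x, g y = 2 * ∫ y in (0:ℝ)..x, g y := by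
  have hIic := intervalIntegral.integral_Iic_sub_Iic (a := 0) (b := x)
    hg.integrableOn hg.integrableOn
  have hIoi := intervalIntegral.integral_Ioi_sub_Ioi' (a := 0) (b := x)
    hg.integrableOn hg.integrableOn
  have hsymm : ∫ y in Iic 0, g y = ∫ y in Ioi 0, g y := by
    simpa only [heven, neg_zero] using (integral_comp_neg_Ioi 0 g).symm
  linarith

theorem integral_Ioi_sub_integral_Iic_of_hasDerivAt {F f : ℝ → ℝ}
    (hF : ∀ y, HasDerivAt F (f y) y) (hf : Integrable f)
    (hlim : Tendsto F (cocompact ℝ) (𝓝 0)) (x : ℝ) :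
    (∫ y in Ioi x, f y) - ∫ y in Iic x, f y = -2 * F x := by
  rw [integral_Ioi_of_hasDerivAt_of_tendsto' (fun y _ => hF y) hf.integrableOn
      (hlim.mono_left atTop_le_cocompact),
    integral_Iic_of_hasDerivAt_of_tendsto' (fun y _ => hF y) hf.integrableOn
      (hlim.mono_left atBot_le_cocompact)]
  ring

end SplitAtPoint

section Gaussian

theorem exp_neg_sq_div_eq (σ y : ℝ) :
    exp (-y ^ 2 / (2 * σ ^ 2)) = exp (-(2 * σ ^ 2)⁻¹ * y ^ 2) := by
  ring_nf

variable {σ : ℝ}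

theorem integrable_exp_neg_sq_div (hσ : σ ≠ 0) :
    Integrable fun y : ℝ => exp (-y ^ 2 / (2 * σ ^ 2)) := by
  simpa only [exp_neg_sq_div_eq] using
    integrable_exp_neg_mul_sq (b := (2 * σ ^ 2)⁻¹) (by positivity)

theorem integrable_mul_exp_neg_sq_div (hσ : σ ≠ 0) :
    Integrable fun y : ℝ => y * exp (-y ^ 2 / (2 * σ ^ 2)) := by
  simpa only [exp_neg_sq_div_eq] using
    integrable_mul_exp_neg_mul_sq (b := (2 * σ ^ 2)⁻¹) (by positivity)

theorem tendsto_exp_neg_sq_div_cocompact (hσ : σ ≠ 0) :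
    Tendsto (fun y : ℝ => exp (-y ^ 2 / (2 * σ ^ 2))) (cocompact ℝ) (𝓝 0) := by
  simpa only [rpow_zero, one_mul, exp_neg_sq_div_eq] using
    tendsto_rpow_abs_mul_exp_neg_mul_sq_cocompact (a := (2 * σ ^ 2)⁻¹) (by positivity) 0

theorem hasDerivAt_exp_neg_sq_div (hσ : σ ≠ 0) (y : ℝ) :
    HasDerivAt (fun y : ℝ => -σ ^ 2 * exp (-y ^ 2 / (2 * σ ^ 2)))
      (y * exp (-y ^ 2 / (2 * σ ^ 2))) y := by
  have hexponent : HasDerivAt (fun y : ℝ => -y ^ 2 / (2 * σ ^ 2)) (-(2 * y) / (2 * σ ^ 2)) y := by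
    simpa using (hasDerivAt_pow 2 y).neg.div_const (2 * σ ^ 2)
  refine (hexponent.exp.const_mul (-σ ^ 2)).congr_deriv ?_
  field_simp

theorem intervalIntegral_exp_neg_sq_div (hσ : σ ≠ 0) (x : ℝ) :
    ∫ y in (0:ℝ)..x, exp (-y ^ 2 / (2 * σ ^ 2))
      = √(2 * π) * σ / 2 * erf (x / (√2 * σ)) := by
  have hscale : √2 * σ ≠ 0 := by positivity
  have hsubst : ∀ y : ℝ, exp (-y ^ 2 / (2 * σ ^ 2)) = exp (-(y / (√2 * σ)) ^ 2) := fun y => by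
    rw [div_pow, mul_pow, sq_sqrt zero_le_two, neg_div]
  rw [funext hsubst, intervalIntegral.integral_comp_div (fun t => exp (-t ^ 2)) hscale, erf,
    zero_div, smul_eq_mul, sqrt_mul zero_le_two]
  have hπ : √π ≠ 0 := by positivity
  field_simp

end Gaussian

theorem conv_abs_gaussian_1d (σ : ℝ) (hσ : 0 < σ) (x : ℝ) :
    (∫ y : ℝ, (-|x - y| / 2) * ((1 / (Real.sqrt (2 * π) * σ)) * Real.exp (-y^2 / (2 * σ^2))))
      = -(σ / Real.sqrt (2 * π)) * Real.exp (-x^2 / (2 * σ^2))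
        - (x / 2) * erf (x / (Real.sqrt 2 * σ)) := by
  have hσ₀ : σ ≠ 0 := hσ.ne'
  have hg := integrable_exp_neg_sq_div hσ₀
  have hsplit := integral_abs_sub_mul_eq hg (integrable_mul_exp_neg_sq_div hσ₀) x
  have hlim : Tendsto (fun y : ℝ => -σ ^ 2 * exp (-y ^ 2 / (2 * σ ^ 2))) (cocompact ℝ) (𝓝 0) := by
    simpa only [mul_zero] using (tendsto_exp_neg_sq_div_cocompact hσ₀).const_mul (-σ ^ 2)
  rw [integral_Iic_sub_integral_Ioi_of_even hg (fun y => by rw [neg_sq]) x,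
    intervalIntegral_exp_neg_sq_div hσ₀,
    integral_Ioi_sub_integral_Iic_of_hasDerivAt (hasDerivAt_exp_neg_sq_div hσ₀)
      (integrable_mul_exp_neg_sq_div hσ₀) hlim x] at hsplit
  calc (∫ y : ℝ, (-|x - y| / 2) * ((1 / (√(2 * π) * σ)) * exp (-y ^ 2 / (2 * σ ^ 2))))
      = -(1 / (√(2 * π) * σ)) / 2 * ∫ y, |x - y| * exp (-y ^ 2 / (2 * σ ^ 2)) := by
        rw [← integral_const_mul]
        congr 1 with y
        ring
    _ = _ := by
        rw [hsplit]
        field_simp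
        ring
end

section
/- For σ > 0, the radially symmetric function u₁₁(x) defined by u₁₁(x) = -(1/(4π))[E₁(|x|²/(2σ²)) + 2 ln|x|] for x ≠ 0 and u₁₁(0) = (1/(4π))(γ - ln(2σ²)), where E₁(r) = ∫_r^∞ t⁻¹ e^{-t} dt and γ is the Euler–Mascheroni constant, satisfies -Δu₁₁(x) = (1/(2πσ²)) e^{-|x|²/(2σ²)} for all x ≠ 0 in ℝ². -/
open Real MeasureTheory Filter Classical

noncomputable def E1 (r : ℝ) : ℝ := ∫ t in Set.Ioi r, Real.exp (-t) / t

noncomputable def laplacian (f : EuclideanSpace ℝ (Fin 2) → ℝ)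
    (x : EuclideanSpace ℝ (Fin 2)) : ℝ :=
  ∑ i : Fin 2, fderiv ℝ (fun y => fderiv ℝ f y (EuclideanSpace.single i 1)) x
    (EuclideanSpace.single i 1)

/-!
Away from the origin `u₁₁ x = φ (‖x‖²)` with `φ t = -(E₁ (t / 2σ²) + log t) / 4π`. For a function
of `s = ‖x‖²` the planar Laplacian is `4 (φ' s + s φ'' s) = 4 (s φ' s)'`, and since
`E₁' r = -e^{-r} / r` the logarithmic terms cancel in `s φ' s = -(1 - e^{-s / 2σ²}) / 4π`,
whose derivative is the Gaussian.
-/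

open Set Topology

theorem hasDerivAt_integral_Ioi {E : Type*} [NormedAddCommGroup E] [NormedSpace ℝ E]
    [CompleteSpace E] {f : ℝ → E} {a r : ℝ} (hf : IntegrableOn f (Ioi a)) (har : a < r)
    (hcont : ContinuousAt f r) :
    HasDerivAt (fun s => ∫ t in Ioi s, f t) (-f r) r := by
  have hmeas : StronglyMeasurableAtFilter f (𝓝 r) :=
    AEStronglyMeasurable.stronglyMeasurableAtFilter_of_mem hf.aestronglyMeasurable
      (Ioi_mem_nhds har)
  have hint : IntervalIntegrable f volume a r :=
    (intervalIntegrable_iff_integrableOn_Ioc_of_le har.le).mpr (hf.mono_set Ioc_subset_Ioi_self)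
  refine ((intervalIntegral.integral_hasDerivAt_right hint hmeas hcont).const_sub
    (∫ t in Ioi a, f t)).congr_of_eventuallyEq ?_
  filter_upwards [Ioi_mem_nhds har] with s hs
  rw [← intervalIntegral.integral_Ioi_sub_Ioi hf (le_of_lt hs), sub_sub_cancel]

theorem integrableOn_exp_neg_div_self_Ioi {a : ℝ} (ha : 0 < a) :
    IntegrableOn (fun t => exp (-t) / t) (Ioi a) := by
  refine ((integrableOn_exp_neg_Ioi a).div_const a).mono'
    (by fun_prop : Measurable fun t => exp (-t) / t).aestronglyMeasurable ?_
  filter_upwards [ae_restrict_mem measurableSet_Ioi] with t (ht : a < t)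
  rw [norm_of_nonneg (div_nonneg (exp_nonneg _) (ha.trans ht).le)]
  gcongr

theorem hasDerivAt_E1 {r : ℝ} (hr : 0 < r) : HasDerivAt E1 (-(exp (-r) / r)) r :=
  hasDerivAt_integral_Ioi (integrableOn_exp_neg_div_self_Ioi (half_pos hr)) (half_lt_self hr)
    (by fun_prop (disch := exact hr.ne'))

section Radial

variable {E : Type*} [NormedAddCommGroup E] [InnerProductSpace ℝ E]

theorem HasDerivAt.hasFDerivAt_comp_norm_sq {φ : ℝ → ℝ} {d : ℝ} {x : E}
    (h : HasDerivAt φ d (‖x‖ ^ 2)) :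
    HasFDerivAt (fun y => φ (‖y‖ ^ 2)) ((2 * d) • innerSL ℝ x) x := by
  refine (h.comp_hasFDerivAt x (hasStrictFDerivAt_norm_sq x).hasFDerivAt).congr_fderiv ?_
  ext v
  simp only [smul_apply, smul_eq_mul, nsmul_eq_mul]
  push_cast
  ring

variable {φ φ' : ℝ → ℝ} {u : E → ℝ}

theorem fderiv_apply_of_eq_comp_norm_sq (hu : ∀ y ≠ 0, u y = φ (‖y‖ ^ 2))
    (hφ : ∀ t > 0, HasDerivAt φ (φ' t) t) {y : E} (hy : y ≠ 0) (v : E) :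
    fderiv ℝ u y v = 2 * φ' (‖y‖ ^ 2) * inner ℝ y v := by
  have hloc : u =ᶠ[𝓝 y] fun z => φ (‖z‖ ^ 2) :=
    eventually_ne_nhds hy |>.mono fun z hz => hu z hz
  rw [hloc.fderiv_eq, ((hφ _ (by positivity)).hasFDerivAt_comp_norm_sq).fderiv]
  rfl

theorem fderiv_fderiv_apply_of_eq_comp_norm_sq (hu : ∀ y ≠ 0, u y = φ (‖y‖ ^ 2))
    (hφ : ∀ t > 0, HasDerivAt φ (φ' t) t) {φ'' : ℝ} {x : E}
    (hφ' : HasDerivAt φ' φ'' (‖x‖ ^ 2)) (hx : x ≠ 0) (v : E) :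
    fderiv ℝ (fun y => fderiv ℝ u y v) x v =
      2 * φ' (‖x‖ ^ 2) * ‖v‖ ^ 2 + 4 * φ'' * inner ℝ x v ^ 2 := by
  have hloc : (fun y => fderiv ℝ u y v) =ᶠ[𝓝 x] fun y => 2 * φ' (‖y‖ ^ 2) * inner ℝ y v :=
    eventually_ne_nhds hx |>.mono fun y hy => fderiv_apply_of_eq_comp_norm_sq hu hφ hy v
  have hinner : HasFDerivAt (fun y => inner ℝ y v) (innerSL ℝ v) x := by
    convert (innerSL ℝ v).hasFDerivAt using 1
    exact funext fun y => real_inner_comm v y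
  rw [hloc.fderiv_eq,
    HasFDerivAt.fderiv (f := fun y => 2 * φ' (‖y‖ ^ 2) * inner ℝ y v)
      ((hφ'.hasFDerivAt_comp_norm_sq.const_mul 2).mul hinner)]
  simp only [add_apply, smul_apply, innerSL_apply_apply, smul_eq_mul, real_inner_self_eq_norm_sq]
  ring

end Radial

theorem laplacian_of_eq_comp_norm_sq {φ φ' : ℝ → ℝ} {u : EuclideanSpace ℝ (Fin 2) → ℝ}
    (hu : ∀ y ≠ 0, u y = φ (‖y‖ ^ 2)) (hφ : ∀ t > 0, HasDerivAt φ (φ' t) t) {φ'' : ℝ}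
    {x : EuclideanSpace ℝ (Fin 2)} (hφ' : HasDerivAt φ' φ'' (‖x‖ ^ 2)) (hx : x ≠ 0) :
    laplacian u x = 4 * φ' (‖x‖ ^ 2) + 4 * ‖x‖ ^ 2 * φ'' := by
  simp only [laplacian, fderiv_fderiv_apply_of_eq_comp_norm_sq hu hφ hφ' hx,
    PiLp.norm_single, EuclideanSpace.inner_single_right, EuclideanSpace.norm_sq_eq,
    Fin.sum_univ_two, norm_eq_abs, sq_abs, norm_one, one_pow, mul_one, ringHom_apply, one_mul]
  ring

theorem hasDerivAt_E1_div_add_log {c t : ℝ} (hc : 0 < c) (ht : 0 < t) :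
    HasDerivAt (fun t => E1 (t / c) + log t) ((1 - exp (-(t / c))) / t) t := by
  have hE1 := (hasDerivAt_E1 (div_pos ht hc)).comp t ((hasDerivAt_id t).div_const c)
  refine (hE1.add (hasDerivAt_log ht.ne')).congr_deriv ?_
  field_simp
  ring

theorem hasDerivAt_one_sub_exp_neg_div_div_self (c : ℝ) {t : ℝ} (ht : t ≠ 0) :
    HasDerivAt (fun t => (1 - exp (-(t / c))) / t)
      ((exp (-(t / c)) / c * t - (1 - exp (-(t / c)))) / t ^ 2) t := by
  have hexp := (hasDerivAt_exp _).comp t ((hasDerivAt_id t).div_const c).neg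
  refine ((hexp.const_sub 1).div (hasDerivAt_id t) ht).congr_deriv ?_
  simp only [Function.comp_apply, Pi.neg_apply, id_eq]
  ring

theorem laplacian_u11_general (σ : ℝ) (hσ : 0 < σ) (γ : ℝ)
    (u11 : EuclideanSpace ℝ (Fin 2) → ℝ)
    (hu11 : ∀ x : EuclideanSpace ℝ (Fin 2),
      u11 x = if x = 0 then (1 / (4 * π)) * (γ - Real.log (2 * σ^2))
        else -(1 / (4 * π)) * (E1 (‖x‖^2 / (2 * σ^2)) + 2 * Real.log ‖x‖))
    (x : EuclideanSpace ℝ (Fin 2)) (hx : x ≠ 0) :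
    -(laplacian u11 x) = (1 / (2 * π * σ^2)) * Real.exp (-‖x‖^2 / (2 * σ^2)) := by
  set c := 2 * σ ^ 2
  have hc : 0 < c := by positivity
  have hu : ∀ y ≠ 0, u11 y = -(1 / (4 * π)) * (E1 (‖y‖ ^ 2 / c) + log (‖y‖ ^ 2)) := by
    intro y hy
    rw [hu11 y, if_neg hy, log_pow, Nat.cast_ofNat]
  have hφ : ∀ t > 0, HasDerivAt (fun t => -(1 / (4 * π)) * (E1 (t / c) + log t))
      (-(1 / (4 * π)) * ((1 - exp (-(t / c))) / t)) t :=
    fun t ht => (hasDerivAt_E1_div_add_log hc ht).const_mul _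
  have hx' : ‖x‖ ≠ 0 := norm_ne_zero_iff.mpr hx
  have hφ' := (hasDerivAt_one_sub_exp_neg_div_div_self c (pow_ne_zero 2 hx')).const_mul
    (-(1 / (4 * π)))
  rw [laplacian_of_eq_comp_norm_sq hu hφ hφ' hx, neg_div]
  have hπ : π ≠ 0 := pi_ne_zero
  field_simp
  ring

theorem laplacian_u11 (σ : ℝ) (hσ : 0 < σ) (γ : ℝ)
    (hγ : Tendsto (fun n : ℕ => (∑ k ∈ Finset.range n, (1 : ℝ) / (k + 1)) - Real.log n)
      atTop (nhds γ))
    (u11 : EuclideanSpace ℝ (Fin 2) → ℝ)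
    (hu11 : ∀ x : EuclideanSpace ℝ (Fin 2),
      u11 x = if x = 0 then (1 / (4 * π)) * (γ - Real.log (2 * σ^2))
        else -(1 / (4 * π)) * (E1 (‖x‖^2 / (2 * σ^2)) + 2 * Real.log ‖x‖))
    (x : EuclideanSpace ℝ (Fin 2)) (hx : x ≠ 0) :
    -(laplacian u11 x) = (1 / (2 * π * σ^2)) * Real.exp (-‖x‖^2 / (2 * σ^2)) :=
  laplacian_u11_general σ hσ γ u11 hu11 x hx
end

section
/- The limit as x → 0 (x ∈ ℝ², x ≠ 0) of -(1/(4π))[E₁(|x|²/(2σ²)) + 2 ln|x|] equals (1/(4π))(γ - ln(2σ²)), where γ is the Euler–Mascheroni constant. -/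
open Real MeasureTheory Filter

/-!
Integrating by parts, `E₁(r) = ∫_r^∞ log t · e^{-t} dt - log r · e^{-r}` for `r > 0`. As `r → 0⁺`
the boundary term differs from `-log r` by `log r · (1 - e^{-r}) = O(r log r) → 0`, while the
integral tends to `∫_0^∞ log t · e^{-t} dt = Γ'(1) = -γ`. Hence `E₁(r) + log r → -γ`, and with
`r = |x|² / (2σ²)` one has `E₁(r) + 2 log |x| = (E₁(r) + log r) + log (2σ²)`.
-/

open Set Topology

lemma abs_log_le_two_mul_rpow_neg_half_add_self {t : ℝ} (ht : 0 < t) :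
    |log t| ≤ 2 * t ^ (-(1 / 2) : ℝ) + t := by
  have hsmall : -log t ≤ 2 * t ^ (-(1 / 2) : ℝ) := by
    have := log_le_rpow_div (inv_pos.2 ht).le (by norm_num : (0 : ℝ) < 1 / 2)
    rwa [log_inv, inv_rpow ht.le, ← rpow_neg ht.le, div_eq_mul_inv, mul_comm,
      show (1 / 2 : ℝ)⁻¹ = 2 by norm_num] at this
  have hlarge : log t ≤ t := log_le_self ht.le
  have hrpow : 0 ≤ t ^ (-(1 / 2) : ℝ) := by positivity
  rw [abs_le]
  constructor <;> linarith

lemma integrableOn_log_mul_exp_neg : IntegrableOn (fun t => log t * exp (-t)) (Ioi 0) := by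
  have hbound : IntegrableOn (fun t => 2 * (exp (-t) * t ^ ((1 / 2 : ℝ) - 1))
      + exp (-t) * t ^ ((2 : ℝ) - 1)) (Ioi 0) :=
    ((GammaIntegral_convergent one_half_pos).const_mul 2).add
      (GammaIntegral_convergent two_pos)
  refine hbound.mono' (by fun_prop) ?_
  filter_upwards [ae_restrict_mem measurableSet_Ioi] with t (ht : 0 < t)
  rw [norm_mul, norm_of_nonneg (exp_pos _).le, norm_eq_abs]
  calc |log t| * exp (-t) ≤ (2 * t ^ (-(1 / 2) : ℝ) + t) * exp (-t) :=
        mul_le_mul_of_nonneg_right (abs_log_le_two_mul_rpow_neg_half_add_self ht) (exp_pos _).le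
    _ = _ := by norm_num; ring

lemma integral_log_mul_exp_neg :
    ∫ t in Ioi 0, log t * exp (-t) = -eulerMascheroniConstant := by
  have hGammaIntegral := Complex.hasDerivAt_GammaIntegral (s := 1) (by simp)
  have hGamma : HasDerivAt Complex.Gamma (∫ t in Ioi 0, log t * exp (-t) : ℝ) 1 := by
    refine (hGammaIntegral.congr_of_eventuallyEq ?_).congr_deriv ?_
    · filter_upwards [(isOpen_lt continuous_const Complex.continuous_re).mem_nhds
        (by simp : (0 : ℝ) < (1 : ℂ).re)] with s hs
      exact Complex.Gamma_eq_integral hs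
    · rw [← integral_complex_ofReal]
      refine setIntegral_congr_fun measurableSet_Ioi fun t _ => ?_
      simp
  have hreal : HasDerivAt Gamma (∫ t in Ioi 0, log t * exp (-t)) 1 := by
    simpa [Complex.Gamma_ofReal] using hGamma.real_of_complex
  exact hreal.unique hasDerivAt_Gamma_one

lemma integrableOn_exp_neg_div_self {r : ℝ} (hr : 0 < r) :
    IntegrableOn (fun t => exp (-t) / t) (Ioi r) := by
  have hbound : IntegrableOn (fun t => r⁻¹ * exp (-t)) (Ioi r) :=
    (integrableOn_exp_neg_Ioi r).const_mul r⁻¹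
  refine hbound.mono' (Measurable.aestronglyMeasurable (by fun_prop)) ?_
  filter_upwards [ae_restrict_mem measurableSet_Ioi] with t (ht : r < t)
  rw [norm_div, norm_of_nonneg (exp_pos _).le, norm_of_nonneg (hr.trans ht).le, div_eq_inv_mul]
  gcongr

lemma tendsto_log_mul_exp_neg_atTop : Tendsto (fun t => log t * exp (-t)) atTop (𝓝 0) := by
  have h := (tendsto_pow_log_div_mul_add_atTop 1 0 1 one_ne_zero).mul
    (tendsto_pow_mul_exp_neg_atTop_nhds_zero 1)
  rw [mul_zero] at h
  refine h.congr' ?_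
  filter_upwards [eventually_gt_atTop 0] with t ht
  field_simp
  simp

lemma E1_eq_integral_log_mul_exp_neg_sub {r : ℝ} (hr : 0 < r) :
    E1 r = (∫ t in Ioi r, log t * exp (-t)) - log r * exp (-r) := by
  have hlog : IntegrableOn (fun t => log t * exp (-t)) (Ioi r) :=
    integrableOn_log_mul_exp_neg.mono_set (Ioi_subset_Ioi hr.le)
  have hderiv : ∀ t ∈ Ici r, HasDerivAt (fun t => log t * exp (-t))
      (exp (-t) / t - log t * exp (-t)) t := fun t (ht : r ≤ t) =>
    ((hasDerivAt_log (hr.trans_le ht).ne').fun_mul (hasDerivAt_neg t).exp).congr_deriv (by ring)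
  have hparts := integral_Ioi_of_hasDerivAt_of_tendsto' hderiv
    ((integrableOn_exp_neg_div_self hr).sub hlog) tendsto_log_mul_exp_neg_atTop
  rw [integral_sub (integrableOn_exp_neg_div_self hr) hlog] at hparts
  rw [E1]
  linarith

lemma tendsto_log_mul_one_sub_exp_neg :
    Tendsto (fun r => log r * (1 - exp (-r))) (𝓝[>] 0) (𝓝 0) := by
  have hmul_log : Tendsto (fun r => r * log r) (𝓝[>] 0) (𝓝 0) := by
    simpa using (continuous_mul_log.tendsto 0).mono_left nhdsWithin_le_nhds
  refine squeeze_zero_norm' ?_ (by simpa using hmul_log.norm)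
  filter_upwards [self_mem_nhdsWithin] with r (hr : 0 < r)
  have h1 : 0 ≤ 1 - exp (-r) := by linarith [exp_le_one_iff.2 (neg_nonpos.2 hr.le)]
  have h2 : 1 - exp (-r) ≤ r := by linarith [one_sub_le_exp_neg r]
  rw [norm_mul, norm_of_nonneg h1, norm_eq_abs, abs_of_pos hr, mul_comm]
  gcongr

lemma tendsto_E1_add_log :
    Tendsto (fun r => E1 r + log r) (𝓝[>] 0) (𝓝 (-eulerMascheroniConstant)) := by
  have hint : Tendsto (fun r => ∫ t in Ioi r, log t * exp (-t)) (𝓝[>] 0)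
      (𝓝 (-eulerMascheroniConstant)) := by
    rw [← integral_log_mul_exp_neg]
    exact integrableOn_log_mul_exp_neg.continuousWithinAt_Ici_primitive_Ioi.mono
      Ioi_subset_Ici_self
  have h := tendsto_log_mul_one_sub_exp_neg.add hint
  rw [zero_add] at h
  refine h.congr' ?_
  filter_upwards [self_mem_nhdsWithin] with r (hr : 0 < r)
  rw [E1_eq_integral_log_mul_exp_neg_sub hr]
  ring

lemma tendsto_sq_div_nhdsGT_zero {c : ℝ} (hc : 0 < c) :
    Tendsto (fun r : ℝ => r ^ 2 / c) (𝓝[>] 0) (𝓝[>] 0) := by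
  refine tendsto_nhdsWithin_of_tendsto_nhds_of_eventually_within _ ?_ ?_
  · simpa using ((continuous_pow 2).div_const c).tendsto 0 |>.mono_left nhdsWithin_le_nhds
  · filter_upwards [self_mem_nhdsWithin] with r (hr : 0 < r)
    exact div_pos (pow_pos hr 2) hc

lemma tendsto_E1_norm_sq_div_add_two_mul_log_norm {E : Type*} [NormedAddGroup E] {c : ℝ}
    (hc : 0 < c) : Tendsto (fun x : E => E1 (‖x‖ ^ 2 / c) + 2 * log ‖x‖) (𝓝[≠] 0)
      (𝓝 (log c - eulerMascheroniConstant)) := by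
  have h := ((tendsto_E1_add_log.comp
    ((tendsto_sq_div_nhdsGT_zero hc).comp (tendsto_norm_nhdsNE_zero (E := E)))).add_const (log c))
  rw [neg_add_eq_sub] at h
  refine h.congr' ?_
  filter_upwards [self_mem_nhdsWithin] with x (hx : x ≠ 0)
  simp only [Function.comp_apply]
  rw [log_div (pow_ne_zero 2 (norm_ne_zero_iff.2 hx)) hc.ne', log_pow]
  push_cast
  ring

theorem limit_u11_at_zero (σ : ℝ) (hσ : 0 < σ) (γ : ℝ)
    (hγ : Tendsto (fun n : ℕ => (∑ k ∈ Finset.range n, (1 : ℝ) / (k + 1)) - Real.log n)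
      atTop (nhds γ)) :
    Tendsto (fun x : EuclideanSpace ℝ (Fin 2) =>
        -(1 / (4 * π)) * (E1 (‖x‖^2 / (2 * σ^2)) + 2 * Real.log ‖x‖))
      (nhdsWithin 0 {x : EuclideanSpace ℝ (Fin 2) | x ≠ 0})
      (nhds ((1 / (4 * π)) * (γ - Real.log (2 * σ^2)))) := by
  have hγ_eq : γ = eulerMascheroniConstant := by
    refine tendsto_nhds_unique hγ (tendsto_harmonic_sub_log.congr fun n => ?_)
    simp [harmonic]
  have h := (tendsto_E1_norm_sq_div_add_two_mul_log_norm (E := EuclideanSpace ℝ (Fin 2))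
    (by positivity : 0 < 2 * σ ^ 2)).const_mul (-(1 / (4 * π)))
  rwa [hγ_eq, show 1 / (4 * π) * (eulerMascheroniConstant - log (2 * σ ^ 2))
    = -(1 / (4 * π)) * (log (2 * σ ^ 2) - eulerMascheroniConstant) by ring]
end
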